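/- arXiv:2601.12440 — 4 statements merged into one kernel-verified Lean document; each statement's English description precedes it below -/
import Mathlib

section
/- For all real numbers t > 0 and ζ > 1, the infinite product ∏_{i=0}^∞ (1 + t·ζ^i)^{1/ζ^i} converges and satisfies ∏_{i=0}^∞ (1 + t·ζ^i)^{1/ζ^i} ≤ exp(2√ζ/(ζ−1)) · (1 + √t)^{2ζ/(ζ−1)}. -/
open Real

/-- Lemma 2.2 (product estimate): for `t > 0` and `ζ > 1`, the infinite product
`∏_{i=0}^∞ (1 + t·ζ^i)^{1/ζ^i}` converges and is bounded by
`exp(2√ζ/(ζ−1)) · (1 + √t)^{2ζ/(ζ−1)}`. -/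
theorem stmt_0 (t ζ : ℝ) (ht : 0 < t) (hζ : 1 < ζ) :
    Multipliable (fun i : ℕ => (1 + t * ζ ^ i) ^ ((ζ ^ i)⁻¹ : ℝ)) ∧
    (∏' i : ℕ, (1 + t * ζ ^ i) ^ ((ζ ^ i)⁻¹ : ℝ)) ≤
      Real.exp (2 * Real.sqrt ζ / (ζ - 1)) *
        (1 + Real.sqrt t) ^ (2 * ζ / (ζ - 1)) := by
  have hζ0 : (0:ℝ) < ζ := lt_trans one_pos hζ
  set s := Real.sqrt t with hsdef
  set u := Real.sqrt ζ with hudef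
  have hs0 : 0 < s := Real.sqrt_pos.mpr ht
  have hst : s * s = t := Real.mul_self_sqrt ht.le
  have hu0 : 0 < u := Real.sqrt_pos.mpr hζ0
  have hu1 : 1 ≤ u := by
    rw [hudef]
    rw [show (1:ℝ) = Real.sqrt 1 by simp]
    exact Real.sqrt_le_sqrt hζ.le
  have huζ : u * u = ζ := Real.mul_self_sqrt hζ0.le
  have hinv0 : (0:ℝ) ≤ ζ⁻¹ := by positivity
  have hinv1 : ζ⁻¹ < 1 := inv_lt_one_of_one_lt₀ hζ
  have hbase : ∀ i : ℕ, (0:ℝ) < 1 + t * ζ ^ i := fun i => by positivity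
  set f : ℕ → ℝ := fun i => (ζ ^ i)⁻¹ * Real.log (1 + t * ζ ^ i) with hfdef
  have hfexp : ∀ i, (1 + t * ζ ^ i) ^ ((ζ ^ i)⁻¹ : ℝ) = Real.exp (f i) := by
    intro i
    rw [Real.rpow_def_of_pos (hbase i), hfdef, mul_comm]
  -- bound f by g
  set g : ℕ → ℝ := fun i => (ζ⁻¹) ^ i * (2 * Real.log (1 + s)) +
      ((i : ℝ) * (ζ⁻¹) ^ i) * Real.log ζ with hgdef
  have hf0 : ∀ i, 0 ≤ f i := by
    intro i
    apply mul_nonneg (by positivity)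
    apply Real.log_nonneg
    nlinarith [pow_pos hζ0 i]
  have hfg : ∀ i, f i ≤ g i := by
    intro i
    have hζi1 : (1:ℝ) ≤ ζ ^ i := one_le_pow₀ hζ.le
    have hui : (0:ℝ) < u ^ i := pow_pos hu0 i
    have huui : u ^ i * u ^ i = ζ ^ i := by
      rw [← mul_pow, huζ]
    have key : 1 + t * ζ ^ i ≤ ((1 + s) * u ^ i) ^ 2 := by
      have : ((1 + s) * u ^ i) ^ 2 = (1 + 2*s + s*s) * (u ^ i * u ^ i) := by ring
      rw [this, huui, hst]
      nlinarith
    have hlog : Real.log (1 + t * ζ ^ i) ≤ 2 * Real.log (1 + s) + (i : ℝ) * Real.log ζ := by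
      have h1 : Real.log (1 + t * ζ ^ i) ≤ Real.log (((1 + s) * u ^ i) ^ 2) :=
        Real.log_le_log (hbase i) key
      have h2 : Real.log (((1 + s) * u ^ i) ^ 2) =
          2 * Real.log (1 + s) + (i:ℝ) * Real.log ζ := by
        rw [Real.log_pow, Real.log_mul (by positivity) (by positivity), Real.log_pow]
        have : Real.log ζ = 2 * Real.log u := by
          rw [← huζ, Real.log_mul hu0.ne' hu0.ne']; ring
        rw [this]; push_cast; ring
      linarith
    have hζipos : (0:ℝ) < ζ ^ i := pow_pos hζ0 i
    calc f i ≤ (ζ ^ i)⁻¹ * (2 * Real.log (1 + s) + (i : ℝ) * Real.log ζ) := by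
          apply mul_le_mul_of_nonneg_left hlog (by positivity)
      _ = g i := by
          rw [hgdef]
          simp only [inv_pow]
          ring
  have hga : Summable (fun i : ℕ => (ζ⁻¹) ^ i * (2 * Real.log (1 + s))) :=
    (summable_geometric_of_lt_one hinv0 hinv1).mul_right _
  have hgb : Summable (fun i : ℕ => ((i : ℝ) * (ζ⁻¹) ^ i) * Real.log ζ) := by
    have : Summable (fun i : ℕ => (i : ℝ) * (ζ⁻¹) ^ i) := by
      have h := summable_pow_mul_geometric_of_norm_lt_one (R := ℝ) 1
        (r := ζ⁻¹) (by rw [Real.norm_eq_abs, abs_of_nonneg hinv0]; exact hinv1)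
      simpa using h
    exact this.mul_right _
  have hgsum : Summable g := hga.add hgb
  have hfsum : Summable f := Summable.of_nonneg_of_le hf0 hfg hgsum
  have hprod : HasProd (fun i : ℕ => (1 + t * ζ ^ i) ^ ((ζ ^ i)⁻¹ : ℝ))
      (Real.exp (∑' i, f i)) := by
    have hfun : (fun i : ℕ => (1 + t * ζ ^ i) ^ ((ζ ^ i)⁻¹ : ℝ)) = rexp ∘ f :=
      funext hfexp
    rw [hfun]
    exact hfsum.hasSum.rexp
  refine ⟨hprod.multipliable, ?_⟩
  rw [hprod.tprod_eq]
  -- bound the sum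
  have htsum_le : (∑' i, f i) ≤ ∑' i, g i := Summable.tsum_le_tsum hfg hfsum hgsum
  have hgval : (∑' i, g i) = 2 * Real.log (1 + s) * (1 - ζ⁻¹)⁻¹ +
      Real.log ζ * (ζ⁻¹ / (1 - ζ⁻¹) ^ 2) := by
    rw [hgdef, Summable.tsum_add hga hgb]
    congr 1
    · rw [tsum_mul_right, tsum_geometric_of_lt_one hinv0 hinv1]; ring
    · rw [tsum_mul_right, tsum_coe_mul_geometric_of_norm_lt_one
        (by rw [Real.norm_eq_abs, abs_of_nonneg hinv0]; exact hinv1)]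
      ring
  have hζ1 : (0:ℝ) < ζ - 1 := by linarith
  have hlogζ : Real.log ζ ≤ 2 * (u - 1) := by
    have h1 : Real.log u ≤ u - 1 := Real.log_le_sub_one_of_pos hu0
    have h2 : Real.log ζ = 2 * Real.log u := by
      rw [← huζ, Real.log_mul hu0.ne' hu0.ne']; ring
    linarith
  have hlogζ0 : 0 ≤ Real.log ζ := Real.log_nonneg hζ.le
  have hlogs0 : 0 ≤ Real.log (1 + s) := Real.log_nonneg (by linarith)
  have hkey : (∑' i, g i) ≤ 2 * u / (ζ - 1) + Real.log (1 + s) * (2 * ζ / (ζ - 1)) := by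
    rw [hgval]
    have e1 : (1 - ζ⁻¹)⁻¹ = ζ / (ζ - 1) := by
      have : 1 - ζ⁻¹ = (ζ - 1) / ζ := by field_simp
      rw [this, inv_div]
    have hζ1' : (0:ℝ) < ζ - 1 := by linarith
    have e2 : ζ⁻¹ / (1 - ζ⁻¹) ^ 2 = ζ / (ζ - 1) ^ 2 := by
      have hpos : (0:ℝ) < 1 - ζ⁻¹ := by linarith
      rw [div_eq_div_iff (pow_pos hpos 2).ne' (pow_pos hζ1' 2).ne']
      field_simp
    rw [e1, e2]
    have h1 : 2 * Real.log (1 + s) * (ζ / (ζ - 1)) = Real.log (1 + s) * (2 * ζ / (ζ - 1)) := by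
      ring
    have h2 : Real.log ζ * (ζ / (ζ - 1) ^ 2) ≤ 2 * u / (ζ - 1) := by
      have ha : Real.log ζ * ζ ≤ 2 * u * (ζ - 1) := by
        nlinarith [mul_le_mul_of_nonneg_right hlogζ hζ0.le]
      have hb : Real.log ζ * (ζ / (ζ - 1) ^ 2) = (Real.log ζ * ζ) / (ζ - 1) ^ 2 := by ring
      rw [hb, div_le_div_iff₀ (by positivity) hζ1]
      nlinarith [mul_le_mul_of_nonneg_right ha hζ1.le]
    linarith
  have hRHS : Real.exp (2 * u / (ζ - 1)) * (1 + s) ^ (2 * ζ / (ζ - 1)) =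
      Real.exp (2 * u / (ζ - 1) + Real.log (1 + s) * (2 * ζ / (ζ - 1))) := by
    rw [Real.exp_add, Real.rpow_def_of_pos (by linarith)]
  rw [hRHS]
  exact Real.exp_le_exp.mpr (le_trans htsum_le hkey)
end

section
/- For all real numbers t ≥ 0 and x ≥ 1, one has log(1 + t·x) ≤ 2·log(1 + √t) + 2·(√x − 1). -/
open Real

/-- Pointwise logarithm estimate from the proof of Lemma 2.2:
`log(1 + t·x) ≤ 2·log(1 + √t) + 2·(√x − 1)` for `t ≥ 0`, `x ≥ 1`. -/
theorem stmt_3 (t x : ℝ) (ht : 0 ≤ t) (hx : 1 ≤ x) :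
    Real.log (1 + t * x) ≤
      2 * Real.log (1 + Real.sqrt t) + 2 * (Real.sqrt x - 1) := by
  have hst : 0 ≤ Real.sqrt t := Real.sqrt_nonneg t
  have hx0 : (0:ℝ) < x := lt_of_lt_of_le one_pos hx
  have h1 : (0:ℝ) < 1 + t * x := by nlinarith
  have hsq : Real.sqrt t ^ 2 = t := Real.sq_sqrt ht
  have h2 : 1 + t * x ≤ (1 + Real.sqrt t) ^ 2 * x := by nlinarith
  have hne : ((1 + Real.sqrt t) ^ 2 : ℝ) ≠ 0 := by positivity
  have hlog1 : Real.log (1 + t * x) ≤ Real.log ((1 + Real.sqrt t) ^ 2 * x) :=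
    Real.log_le_log h1 h2
  have hlog2 : Real.log ((1 + Real.sqrt t) ^ 2 * x)
      = 2 * Real.log (1 + Real.sqrt t) + Real.log x := by
    rw [Real.log_mul hne (ne_of_gt hx0), Real.log_pow]
    push_cast
    ring
  have hsx : (0:ℝ) < Real.sqrt x := Real.sqrt_pos.mpr hx0
  have h3 : Real.log x ≤ 2 * (Real.sqrt x - 1) := by
    have := Real.log_le_sub_one_of_pos hsx
    rw [Real.log_sqrt hx0.le] at this
    linarith
  linarith [hlog1, hlog2.le, h3]
end

section
/- For all real numbers t > 0 and ζ > 1, one has ∑_{i=0}^∞ (1/ζ^i)·log(1 + t·ζ^i) ≤ (2ζ/(ζ−1))·log(1 + √t) + 2√ζ/(ζ−1). -/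
open Real

/-- Series estimate from the proof of Lemma 2.2:
`∑_{i=0}^∞ (1/ζ^i)·log(1 + t·ζ^i) ≤ (2ζ/(ζ−1))·log(1 + √t) + 2√ζ/(ζ−1)`
for `t > 0` and `ζ > 1`. -/
theorem stmt_4 (t ζ : ℝ) (ht : 0 < t) (hζ : 1 < ζ) :
    (∑' i : ℕ, (ζ ^ i)⁻¹ * Real.log (1 + t * ζ ^ i)) ≤
      2 * ζ / (ζ - 1) * Real.log (1 + Real.sqrt t) +
        2 * Real.sqrt ζ / (ζ - 1) := by
  have hζ0 : (0:ℝ) < ζ := lt_trans one_pos hζ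
  have hζ1 : (0:ℝ) < ζ - 1 := sub_pos.mpr hζ
  have hL0 : 0 ≤ Real.log (1 + Real.sqrt t) :=
    Real.log_nonneg (by nlinarith [Real.sqrt_nonneg t])
  set L := Real.log (1 + Real.sqrt t) with hLdef
  have hrpos : (0:ℝ) < ζ⁻¹ := inv_pos.mpr hζ0
  have hr1 : ζ⁻¹ < 1 := inv_lt_one_of_one_lt₀ hζ
  have hrabs : ‖(ζ⁻¹ : ℝ)‖ < 1 := by
    rw [Real.norm_eq_abs, abs_of_pos hrpos]; exact hr1
  -- the bounding sequence
  set b : ℕ → ℝ := fun i => 2 * L * ζ⁻¹ ^ i + Real.log ζ * ((i : ℝ) * ζ⁻¹ ^ i) with hbdef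
  have hsum1 : Summable (fun i : ℕ => (ζ⁻¹ : ℝ) ^ i) :=
    summable_geometric_of_lt_one hrpos.le hr1
  have hsum2 : Summable (fun i : ℕ => (i : ℝ) * ζ⁻¹ ^ i) := by
    have := summable_pow_mul_geometric_of_norm_lt_one 1 hrabs (R := ℝ)
    simpa using this
  have hb : Summable b := (hsum1.mul_left _).add (hsum2.mul_left _)
  -- pointwise bound
  have hle : ∀ i : ℕ, (ζ ^ i)⁻¹ * Real.log (1 + t * ζ ^ i) ≤ b i := by
    intro i
    have hpow1 : (1:ℝ) ≤ ζ ^ i := one_le_pow₀ hζ.le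
    have hpow0 : (0:ℝ) < ζ ^ i := lt_of_lt_of_le one_pos hpow1
    have key : Real.log (1 + t * ζ ^ i) ≤ 2 * L + (i : ℝ) * Real.log ζ := by
      have h1 : 1 + t * ζ ^ i ≤ (1 + Real.sqrt t) ^ 2 * ζ ^ i := by
        nlinarith [Real.sqrt_nonneg t, Real.sq_sqrt ht.le, hpow1]
      calc Real.log (1 + t * ζ ^ i) ≤ Real.log ((1 + Real.sqrt t) ^ 2 * ζ ^ i) :=
            Real.log_le_log (by positivity) h1
        _ = 2 * L + (i : ℝ) * Real.log ζ := by
            rw [Real.log_mul (by positivity) (by positivity), Real.log_pow, Real.log_pow]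
            push_cast; ring
    have : (ζ ^ i)⁻¹ * Real.log (1 + t * ζ ^ i) ≤ (ζ ^ i)⁻¹ * (2 * L + (i:ℝ) * Real.log ζ) :=
      mul_le_mul_of_nonneg_left key (by positivity)
    calc (ζ ^ i)⁻¹ * Real.log (1 + t * ζ ^ i) ≤ (ζ ^ i)⁻¹ * (2 * L + (i:ℝ) * Real.log ζ) := this
      _ = b i := by rw [hbdef]; simp only [← inv_pow]; ring
  -- summability of the original series
  have hnn : ∀ i : ℕ, 0 ≤ (ζ ^ i)⁻¹ * Real.log (1 + t * ζ ^ i) := by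
    intro i
    have hpow0 : (0:ℝ) < ζ ^ i := pow_pos hζ0 i
    have : 0 ≤ Real.log (1 + t * ζ ^ i) := Real.log_nonneg (by nlinarith)
    positivity
  have ha : Summable (fun i : ℕ => (ζ ^ i)⁻¹ * Real.log (1 + t * ζ ^ i)) :=
    Summable.of_nonneg_of_le hnn hle hb
  have step1 : (∑' i : ℕ, (ζ ^ i)⁻¹ * Real.log (1 + t * ζ ^ i)) ≤ ∑' i, b i :=
    Summable.tsum_le_tsum hle ha hb
  -- compute the tsum of b
  have htsum1 : (∑' i : ℕ, (ζ⁻¹ : ℝ) ^ i) = ζ / (ζ - 1) := by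
    rw [tsum_geometric_of_lt_one hrpos.le hr1]
    field_simp
  have htsum2 : (∑' i : ℕ, (i : ℝ) * ζ⁻¹ ^ i) = ζ / (ζ - 1) ^ 2 := by
    rw [tsum_coe_mul_geometric_of_norm_lt_one hrabs]
    have h1 : (0:ℝ) < 1 - ζ⁻¹ := by
      have : ζ⁻¹ < 1 := hr1; linarith
    rw [div_eq_div_iff (by positivity) (by positivity)]
    field_simp
  have hbval : (∑' i, b i) = 2 * L * (ζ / (ζ - 1)) + Real.log ζ * (ζ / (ζ - 1) ^ 2) := by
    rw [hbdef, Summable.tsum_add (hsum1.mul_left _) (hsum2.mul_left _),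
      tsum_mul_left, tsum_mul_left, htsum1, htsum2]
  -- final inequality
  have hs : Real.sqrt ζ * Real.sqrt ζ = ζ := Real.mul_self_sqrt hζ0.le
  have hs1 : 1 ≤ Real.sqrt ζ := by
    nlinarith [Real.sqrt_nonneg ζ]
  have hlog : Real.log ζ ≤ 2 * (Real.sqrt ζ - 1) := by
    have h1 : Real.log (Real.sqrt ζ) ≤ Real.sqrt ζ - 1 :=
      Real.log_le_sub_one_of_pos (by positivity)
    have h2 : Real.log ζ = 2 * Real.log (Real.sqrt ζ) := by
      rw [Real.log_sqrt hζ0.le]; ring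
    linarith
  have hfin : 2 * L * (ζ / (ζ - 1)) + Real.log ζ * (ζ / (ζ - 1) ^ 2) ≤
      2 * ζ / (ζ - 1) * L + 2 * Real.sqrt ζ / (ζ - 1) := by
    have he : 2 * L * (ζ / (ζ - 1)) = 2 * ζ / (ζ - 1) * L := by ring
    rw [he]
    have h2 : Real.log ζ * (ζ / (ζ - 1) ^ 2) ≤ 2 * Real.sqrt ζ / (ζ - 1) := by
      rw [mul_div_assoc', div_le_div_iff₀ (by positivity) hζ1]
      nlinarith [mul_nonneg (mul_nonneg (sub_nonneg.mpr hs1) (Real.sqrt_nonneg ζ)) hζ1.le,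
        mul_le_mul_of_nonneg_right hlog (mul_nonneg hζ0.le hζ1.le)]
    linarith
  calc (∑' i : ℕ, (ζ ^ i)⁻¹ * Real.log (1 + t * ζ ^ i)) ≤ ∑' i, b i := step1
    _ = 2 * L * (ζ / (ζ - 1)) + Real.log ζ * (ζ / (ζ - 1) ^ 2) := hbval
    _ ≤ _ := hfin
end

section
/- For all real numbers ζ > 1, t > 0 and s > 0, the infinite product ∏_{ℓ=0}^∞ (1 + t·ζ^ℓ)^{s/ζ^{ℓ+1}} converges and satisfies ∏_{ℓ=0}^∞ (1 + t·ζ^ℓ)^{s/ζ^{ℓ+1}} ≤ exp(2s/((ζ−1)·√ζ)) · (1 + √t)^{2s/(ζ−1)}. -/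
open Real

/-- Scaled form of Lemma 2.2: for `ζ > 1`, `t > 0`, `s > 0`, the infinite product
`∏_{ℓ=0}^∞ (1 + t·ζ^ℓ)^{s/ζ^{ℓ+1}}` converges and is bounded by
`exp(2s/((ζ−1)·√ζ)) · (1 + √t)^{2s/(ζ−1)}`. -/
theorem stmt_7 (ζ t s : ℝ) (hζ : 1 < ζ) (ht : 0 < t) (hs : 0 < s) :
    Multipliable (fun ℓ : ℕ => (1 + t * ζ ^ ℓ) ^ (s / ζ ^ (ℓ + 1) : ℝ)) ∧
    (∏' ℓ : ℕ, (1 + t * ζ ^ ℓ) ^ (s / ζ ^ (ℓ + 1) : ℝ)) ≤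
      Real.exp (2 * s / ((ζ - 1) * Real.sqrt ζ)) *
        (1 + Real.sqrt t) ^ (2 * s / (ζ - 1)) := by
  have hζ0 : (0:ℝ) < ζ := lt_trans one_pos hζ
  set r := Real.sqrt ζ with hrdef
  have hr2 : r ^ 2 = ζ := Real.sq_sqrt hζ0.le
  have hr1 : 1 < r := by
    nlinarith [Real.sqrt_nonneg ζ]
  set L := Real.log (1 + Real.sqrt t) with hLdef
  set K := Real.log ζ with hKdef
  have hL0 : 0 ≤ L := Real.log_nonneg (by nlinarith [Real.sqrt_nonneg t])
  have hK0 : 0 ≤ K := Real.log_nonneg hζ.le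
  have hpos : ∀ ℓ : ℕ, (0:ℝ) < 1 + t * ζ ^ ℓ := fun ℓ => by positivity
  set g : ℕ → ℝ := fun ℓ => s / ζ ^ (ℓ + 1) * Real.log (1 + t * ζ ^ ℓ) with hgdef
  have hfg : (fun ℓ : ℕ => (1 + t * ζ ^ ℓ) ^ (s / ζ ^ (ℓ + 1) : ℝ)) = fun ℓ => Real.exp (g ℓ) := by
    funext ℓ
    rw [Real.rpow_def_of_pos (hpos ℓ), hgdef, mul_comm]
  -- logarithmic bound
  have hlog : ∀ ℓ : ℕ, Real.log (1 + t * ζ ^ ℓ) ≤ 2 * L + ℓ * K := by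
    intro ℓ
    have hst : Real.sqrt t ^ 2 = t := Real.sq_sqrt ht.le
    have hz1 : (1:ℝ) ≤ ζ ^ ℓ := one_le_pow₀ hζ.le
    have h1 : 1 + t * ζ ^ ℓ ≤ (1 + Real.sqrt t) ^ 2 * ζ ^ ℓ := by
      nlinarith [Real.sqrt_nonneg t]
    calc Real.log (1 + t * ζ ^ ℓ) ≤ Real.log ((1 + Real.sqrt t) ^ 2 * ζ ^ ℓ) :=
          Real.log_le_log (hpos ℓ) h1
      _ = 2 * L + ℓ * K := by
          rw [Real.log_mul (by positivity) (by positivity), Real.log_pow, Real.log_pow]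
          push_cast; ring
  set x := ζ⁻¹ with hxdef
  have hx0 : 0 < x := inv_pos.2 hζ0
  have hx1 : x < 1 := inv_lt_one_of_one_lt₀ hζ
  have hdiv : ∀ ℓ : ℕ, s / ζ ^ (ℓ + 1) = s * x * x ^ ℓ := by
    intro ℓ
    rw [hxdef, div_eq_mul_inv, ← inv_pow, pow_succ, mul_comm (ζ⁻¹ ^ ℓ) ζ⁻¹, ← mul_assoc]
  have hcoef : ∀ ℓ : ℕ, 0 < s / ζ ^ (ℓ + 1) := fun ℓ => by positivity
  set h : ℕ → ℝ := fun ℓ => 2 * s * L * x * x ^ ℓ + s * K * x * (ℓ * x ^ ℓ) with hhdef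
  have hgh : ∀ ℓ : ℕ, g ℓ ≤ h ℓ := by
    intro ℓ
    have := mul_le_mul_of_nonneg_left (hlog ℓ) (hcoef ℓ).le
    calc g ℓ ≤ s / ζ ^ (ℓ + 1) * (2 * L + ℓ * K) := this
      _ = h ℓ := by rw [hdiv ℓ, hhdef]; ring
  have hg0 : ∀ ℓ : ℕ, 0 ≤ g ℓ := by
    intro ℓ
    exact mul_nonneg (hcoef ℓ).le (Real.log_nonneg (by nlinarith [pow_pos hζ0 ℓ, one_le_pow₀ (a := ζ) (n := ℓ) hζ.le]))
  have hsum_geo : Summable (fun ℓ : ℕ => x ^ ℓ) := summable_geometric_of_lt_one hx0.le hx1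
  have hsum_mul : Summable (fun ℓ : ℕ => (ℓ : ℝ) * x ^ ℓ) := by
    have := summable_pow_mul_geometric_of_norm_lt_one (R := ℝ) 1
      (r := x) (by rw [Real.norm_eq_abs, abs_of_pos hx0]; exact hx1)
    simpa using this
  have hsumh : Summable h := by
    exact ((hsum_geo.mul_left _).add (hsum_mul.mul_left _))
  have hsumg : Summable g := Summable.of_nonneg_of_le hg0 hgh hsumh
  -- compute tsum of h
  have htsumh : ∑' ℓ, h ℓ = 2 * s * L * x * (1 - x)⁻¹ + s * K * x * (x / (1 - x) ^ 2) := by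
    rw [hhdef, Summable.tsum_add (hsum_geo.mul_left _) (hsum_mul.mul_left _),
      tsum_mul_left, tsum_mul_left, tsum_geometric_of_lt_one hx0.le hx1,
      tsum_coe_mul_geometric_of_norm_lt_one (𝕜 := ℝ)
        (by rw [Real.norm_eq_abs, abs_of_pos hx0]; exact hx1)]
  have hζ1 : (0:ℝ) < ζ - 1 := by linarith
  have hr0 : (0:ℝ) < r := lt_trans one_pos hr1
  -- the key bound on K
  have hKb : K ≤ 2 * (ζ - 1) / r := by
    have h1 : Real.log r ≤ r - 1 := by
      have := Real.log_le_sub_one_of_pos hr0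
      linarith
    have h2 : K = 2 * Real.log r := by
      rw [hKdef, ← hr2, Real.log_pow]; push_cast; ring
    rw [h2, le_div_iff₀ hr0]
    nlinarith
  set E := 2 * s / ((ζ - 1) * r) + 2 * s / (ζ - 1) * L with hEdef
  have htsum_le : ∑' ℓ, g ℓ ≤ E := by
    refine le_trans (Summable.tsum_le_tsum hgh hsumg hsumh) ?_
    rw [htsumh, hEdef]
    have hx : x = ζ⁻¹ := hxdef
    have e1 : x * (1 - x)⁻¹ = (ζ - 1)⁻¹ := by
      rw [hx]; field_simp
    have e2 : x * (x / (1 - x) ^ 2) = ((ζ - 1) ^ 2)⁻¹ := by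
      rw [hx]; field_simp
    have : 2 * s * L * x * (1 - x)⁻¹ + s * K * x * (x / (1 - x) ^ 2)
        = 2 * s * L * (ζ - 1)⁻¹ + s * K * ((ζ - 1) ^ 2)⁻¹ := by
      rw [mul_assoc (2 * s * L), e1, mul_assoc (s * K), e2]
    rw [this]
    have hb : s * K * ((ζ - 1) ^ 2)⁻¹ ≤ 2 * s / ((ζ - 1) * r) := by
      rw [mul_inv_le_iff₀ (by positivity), div_mul_eq_mul_div, le_div_iff₀ (by positivity)]
      calc s * K * ((ζ - 1) * r) ≤ s * (2 * (ζ - 1) / r) * ((ζ - 1) * r) := by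
            apply mul_le_mul_of_nonneg_right (mul_le_mul_of_nonneg_left hKb hs.le) (by positivity)
        _ = 2 * s * (ζ - 1) ^ 2 := by field_simp
    have heq : 2 * s * L * (ζ - 1)⁻¹ = 2 * s / (ζ - 1) * L := by ring
    linarith [heq.le, heq.ge]
  -- conclude
  have hprod : HasProd (fun ℓ : ℕ => (1 + t * ζ ^ ℓ) ^ (s / ζ ^ (ℓ + 1) : ℝ))
      (Real.exp (∑' ℓ, g ℓ)) := by
    rw [hfg]
    exact hsumg.hasSum.rexp
  refine ⟨hprod.multipliable, ?_⟩
  rw [hprod.tprod_eq]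
  have hRHS : Real.exp (2 * s / ((ζ - 1) * r)) * (1 + Real.sqrt t) ^ (2 * s / (ζ - 1)) =
      Real.exp E := by
    rw [Real.rpow_def_of_pos (by nlinarith [Real.sqrt_nonneg t]), hEdef, Real.exp_add, ← hLdef,
      mul_comm L]
  rw [hRHS]
  exact Real.exp_le_exp.2 htsum_le
end
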